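/- Let $\mu, \alpha > 0$ with $\kappa = \alpha/\mu \geq 1$, $\eta = 1/\alpha$, and $\beta = (1 - \frac{1}{2\sqrt{\kappa}})^2$. Then the constant $C_0 = \frac{\sqrt{2}(\beta+1)}{\sqrt{\min\{h(\beta,\eta\mu), h(\beta,\eta\alpha)\}}}$ satisfies $C_0 \leq \max\{4, 2\sqrt{\kappa}\} \leq 4\sqrt{\kappa}$, where $h(\beta,z) = -(\beta-(1-\sqrt{z})^2)(\beta-(1+\sqrt{z})^2)$. -/

import Mathlib

/-- The auxiliary function `h(β,z) = -(β-(1-√z)²)(β-(1+√z)²)`. -/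
noncomputable def hfun (β z : ℝ) : ℝ :=
  -((β - (1 - Real.sqrt z) ^ 2) * (β - (1 + Real.sqrt z) ^ 2))

/-!
Write `t = 1/√κ ∈ (0, 1]`. Then `β = (1 - t/2)²`, `ημ = t²` and `ηα = 1`, and both values of `h`
factor explicitly: `h(β, t²) = 3t²(1 - 3t/4)(1 + t/4)` and `h(β, 1) = β(4 - β)`. The bound
`C₀ ≤ c` for a branch `h` of the minimum amounts to the polynomial inequality `2(β+1)² ≤ c² h`,
which holds with `c = 2/t = 2√κ` for the first branch and `c = 4` for the second.
-/

open Real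

theorem hfun_one (β : ℝ) : hfun β 1 = β * (4 - β) := by
  simp only [hfun, sqrt_one]
  ring

theorem hfun_sq_of_momentum {t : ℝ} (ht : 0 ≤ t) :
    hfun ((1 - t / 2) ^ 2) (t ^ 2) = 3 * t ^ 2 * (1 - 3 * t / 4) * (1 + t / 4) := by
  rw [hfun, sqrt_sq ht]
  ring

theorem sqrt_two_mul_div_sqrt_le {a c h : ℝ} (hc : 0 ≤ c) (hle : 2 * a ^ 2 ≤ c ^ 2 * h) :
    √2 * a / √h ≤ c := by
  refine div_le_of_le_mul₀ (sqrt_nonneg h) hc ?_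
  calc √2 * a ≤ |√2 * a| := le_abs_self _
    _ ≤ √(c ^ 2 * h) := abs_le_sqrt (by rwa [mul_pow, sq_sqrt zero_le_two])
    _ = c * √h := by rw [sqrt_mul (sq_nonneg c), sqrt_sq hc]

theorem two_mul_sq_add_one_le_hfun_one {β : ℝ} (hβ₀ : 1 / 4 ≤ β) (hβ₁ : β ≤ 1) :
    2 * (β + 1) ^ 2 ≤ 4 ^ 2 * hfun β 1 := by
  rw [hfun_one]
  nlinarith [mul_nonneg (sub_nonneg.mpr hβ₀) (sub_nonneg.mpr hβ₁)]

theorem two_mul_sq_add_one_le_hfun_sq {t : ℝ} (ht₀ : 0 < t) (ht₁ : t ≤ 1) :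
    2 * ((1 - t / 2) ^ 2 + 1) ^ 2 ≤ (2 / t) ^ 2 * hfun ((1 - t / 2) ^ 2) (t ^ 2) := by
  have hscale : (2 / t) ^ 2 * hfun ((1 - t / 2) ^ 2) (t ^ 2) = 12 * (1 - 3 * t / 4) * (1 + t / 4) := by
    rw [hfun_sq_of_momentum ht₀.le]
    field_simp
    ring
  rw [hscale]
  nlinarith [mul_nonneg (sub_nonneg.mpr ht₁) (sq_nonneg t),
    mul_nonneg (mul_nonneg (sub_nonneg.mpr ht₁) ht₀.le) (sq_nonneg t), sq_nonneg (1 - t)]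

theorem C0_le_four_sqrt_kappa_general (μ α η β : ℝ) (hα : 0 < α) (hκ : 1 ≤ α / μ)
    (hη : η = 1 / α) (hβ : β = (1 - 1 / (2 * Real.sqrt (α / μ))) ^ 2) :
    Real.sqrt 2 * (β + 1) / Real.sqrt (min (hfun β (η * μ)) (hfun β (η * α)))
      ≤ max 4 (2 * Real.sqrt (α / μ)) ∧
    max 4 (2 * Real.sqrt (α / μ)) ≤ 4 * Real.sqrt (α / μ) := by
  set s := √(α / μ)
  have hs : 1 ≤ s := one_le_sqrt.mpr hκ
  have ht₀ : 0 < s⁻¹ := by positivity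
  have ht₁ : s⁻¹ ≤ 1 := inv_le_one_of_one_le₀ hs
  have hβt : β = (1 - s⁻¹ / 2) ^ 2 := by rw [hβ]; field_simp
  have hημ : η * μ = s⁻¹ ^ 2 := by
    rw [hη, inv_pow, sq_sqrt (by linarith), inv_div]
    ring
  have hηα : η * α = 1 := by rw [hη]; field_simp
  refine ⟨?_, max_le (by linarith) (by linarith)⟩
  rw [hημ, hηα]
  rcases min_choice (hfun β (s⁻¹ ^ 2)) (hfun β 1) with hmin | hmin <;> rw [hmin]
  · refine (sqrt_two_mul_div_sqrt_le (by positivity) ?_).trans (le_max_right _ _)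
    simpa only [hβt, div_inv_eq_mul] using two_mul_sq_add_one_le_hfun_sq ht₀ ht₁
  · refine (sqrt_two_mul_div_sqrt_le (by norm_num) ?_).trans (le_max_left _ _)
    exact two_mul_sq_add_one_le_hfun_one (by rw [hβt]; nlinarith) (by rw [hβt]; nlinarith)

/-- Corollary 1: with `η = 1/α` and `β = (1 - 1/(2√κ))²` where `κ = α/μ ≥ 1`, the constant
`C₀ = √2(β+1)/√(min{h(β,ημ), h(β,ηα)})` satisfies `C₀ ≤ max{4, 2√κ} ≤ 4√κ`. -/
theorem C0_le_four_sqrt_kappa (μ α η β : ℝ) (hμ : 0 < μ) (hα : 0 < α) (hκ : 1 ≤ α / μ)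
    (hη : η = 1 / α) (hβ : β = (1 - 1 / (2 * Real.sqrt (α / μ))) ^ 2) :
    Real.sqrt 2 * (β + 1) / Real.sqrt (min (hfun β (η * μ)) (hfun β (η * α)))
      ≤ max 4 (2 * Real.sqrt (α / μ)) ∧
    max 4 (2 * Real.sqrt (α / μ)) ≤ 4 * Real.sqrt (α / μ) :=
  C0_le_four_sqrt_kappa_general μ α η β hα hκ hη hβ
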